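/- If X₁,…,Xₙ are i.i.d. random variables with a subexponential distribution F, then P[X₁+⋯+Xₙ > x, and Xᵢ ≤ x for every 1 ≤ i ≤ n] = o(1-F(x)) as x → ∞. -/

import Mathlib

open MeasureTheory ProbabilityTheory Filter Set Asymptotics
open scoped Classical

/-- Tail of a distribution (measure) on `ℝ`: `F̄(x) = μ(x,∞)`. -/
noncomputable def tailP (μ : Measure ℝ) (x : ℝ) : ℝ := (μ (Set.Ioi x)).toReal

/-- Tail of the `n`-fold convolution: `P[X₁+⋯+Xₙ > x]` for i.i.d. `Xᵢ ∼ μ`. -/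
noncomputable def convTail (μ : Measure ℝ) (n : ℕ) (x : ℝ) : ℝ :=
  ((Measure.pi fun _ : Fin n => μ) {y | x < ∑ i, y i}).toReal

/-- A probability distribution on `(0,∞)` is subexponential if
`(1-F^{*n}(x))/(1-F(x)) → n` for all `n ≥ 2`. -/
def Subexponential (μ : Measure ℝ) : Prop :=
  IsProbabilityMeasure μ ∧ μ (Set.Ioi 0) = 1 ∧ (∀ x : ℝ, 0 < tailP μ x) ∧
    ∀ n : ℕ, 2 ≤ n →
      Tendsto (fun x => convTail μ n x / tailP μ x) atTop (nhds (n : ℝ))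

/-! Almost surely all `Xᵢ` are positive, so a single `Xᵢ > x` already forces `X₁+⋯+Xₙ > x`, and
the truncated probability equals `F̄^{*n}(x) - (1 - F(x)ⁿ)`. After division by `F̄(x)` the first
term tends to `n` by subexponentiality, and so does the second, which is the geometric sum
`∑_{k<n} F(x)ᵏ` with `F(x) → 1`. -/

open Topology

section Tails

variable (μ : Measure ℝ)

lemma convTail_zero_of_nonneg {x : ℝ} (hx : 0 ≤ x) : convTail μ 0 x = 0 := by
  simp [convTail, hx.not_gt]

lemma convTail_one : convTail μ 1 = tailP μ := by
  ext x
  have hset : {y : Fin 1 → ℝ | x < ∑ i, y i} = MeasurableEquiv.funUnique (Fin 1) ℝ ⁻¹' Ioi x := by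
    ext y
    simp
  rw [convTail, tailP, hset]
  exact congrArg ENNReal.toReal ((measurePreserving_funUnique μ (Fin 1)).measure_preimage_equiv _)

lemma measureReal_Iic_eq_one_sub_tailP [IsProbabilityMeasure μ] (x : ℝ) :
    μ.real (Iic x) = 1 - tailP μ x := by
  rw [tailP, ← compl_Iic, ← measureReal_def, probReal_compl_eq_one_sub measurableSet_Iic]
  ring

lemma tendsto_tailP_atTop [IsProbabilityMeasure μ] : Tendsto (tailP μ) atTop (𝓝 0) := by
  have htail : tailP μ = fun x => 1 - cdf μ x := by
    ext x
    rw [cdf_eq_real, measureReal_Iic_eq_one_sub_tailP]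
    ring
  simpa [htail] using (tendsto_cdf_atTop μ).const_sub (1 : ℝ)

end Tails

lemma tendsto_one_sub_one_sub_pow_div {α : Type*} {l : Filter α} {f : α → ℝ}
    (hf : Tendsto f l (𝓝 0)) (hf0 : ∀ᶠ a in l, f a ≠ 0) (n : ℕ) :
    Tendsto (fun a => (1 - (1 - f a) ^ n) / f a) l (𝓝 n) := by
  have hgeom : Tendsto (fun a => ∑ k ∈ Finset.range n, (1 - f a) ^ k) l (𝓝 n) := by
    have hcont : Continuous fun t : ℝ => ∑ k ∈ Finset.range n, (1 - t) ^ k := by fun_prop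
    simpa [Function.comp_def] using (hcont.tendsto 0).comp hf
  refine hgeom.congr' ?_
  filter_upwards [hf0] with a ha
  have hgeom_sum := mul_neg_geom_sum (1 - f a) n
  rw [sub_sub_cancel] at hgeom_sum
  rw [eq_div_iff ha, mul_comm, hgeom_sum]

namespace Subexponential

variable {μ : Measure ℝ}

lemma isProbabilityMeasure (hμ : Subexponential μ) : IsProbabilityMeasure μ := hμ.1

lemma tailP_pos (hμ : Subexponential μ) (x : ℝ) : 0 < tailP μ x := hμ.2.2.1 x

lemma ae_pos (hμ : Subexponential μ) : ∀ᵐ y ∂μ, 0 < y := by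
  have := hμ.isProbabilityMeasure
  exact (prob_compl_eq_zero_iff measurableSet_Ioi).2 hμ.2.1

lemma tendsto_convTail_div_tailP (hμ : Subexponential μ) (n : ℕ) :
    Tendsto (fun x => convTail μ n x / tailP μ x) atTop (𝓝 n) := by
  match n with
  | 0 =>
    refine tendsto_const_nhds.congr' ?_
    filter_upwards [eventually_ge_atTop 0] with x hx
    simp [convTail_zero_of_nonneg μ hx]
  | 1 =>
    refine tendsto_const_nhds.congr fun x => ?_
    rw [convTail_one, div_self (hμ.tailP_pos x).ne', Nat.cast_one]
  | n + 2 => exact hμ.2.2.2 (n + 2) le_add_self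

end Subexponential

section IndependentSample

variable {Ω ι : Type*} [MeasurableSpace Ω] {P : Measure Ω} {μ : Measure ℝ} {X : ι → Ω → ℝ}

lemma ProbabilityTheory.iIndepFun.map_fun_eq_pi_of_map_eq [Fintype ι]
    (hmeas : ∀ i, Measurable (X i)) (hindep : iIndepFun X P) (hlaw : ∀ i, P.map (X i) = μ) :
    P.map (fun ω i => X i ω) = Measure.pi fun _ => μ := by
  rw [hindep.map_fun_eq_pi_map fun i => (hmeas i).aemeasurable]
  simp_rw [hlaw]

lemma measureReal_lt_sum_eq_convTail {n : ℕ} {X : Fin n → Ω → ℝ}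
    (hmeas : ∀ i, Measurable (X i)) (hindep : iIndepFun X P) (hlaw : ∀ i, P.map (X i) = μ)
    (x : ℝ) : P.real {ω | x < ∑ i, X i ω} = convTail μ n x := by
  have hset : MeasurableSet {y : Fin n → ℝ | x < ∑ i, y i} :=
    measurableSet_lt measurable_const (by fun_prop)
  rw [convTail, ← hindep.map_fun_eq_pi_of_map_eq hmeas hlaw, Measure.map_apply (by fun_prop) hset]
  rfl

lemma measureReal_forall_le_eq_pow [Fintype ι] [SigmaFinite μ]
    (hmeas : ∀ i, Measurable (X i)) (hindep : iIndepFun X P) (hlaw : ∀ i, P.map (X i) = μ)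
    (x : ℝ) : P.real {ω | ∀ i, X i ω ≤ x} = μ.real (Iic x) ^ Fintype.card ι := by
  have hset : {ω | ∀ i, X i ω ≤ x} = (fun ω i => X i ω) ⁻¹' univ.pi fun _ => Iic x := by
    ext ω
    simp [Pi.le_def]
  rw [hset, ← map_measureReal_apply (by fun_prop) (.univ_pi fun _ => measurableSet_Iic),
    hindep.map_fun_eq_pi_of_map_eq hmeas hlaw, measureReal_def, Measure.pi_pi]
  simp [measureReal_def]

lemma measureReal_lt_sum_and_forall_le [IsProbabilityMeasure P] [Fintype ι]
    (hmeas : ∀ i, Measurable (X i)) (hnonneg : ∀ i, 0 ≤ᵐ[P] X i) (x : ℝ) :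
    P.real {ω | x < ∑ i, X i ω ∧ ∀ i, X i ω ≤ x}
      = P.real {ω | x < ∑ i, X i ω} - (1 - P.real {ω | ∀ i, X i ω ≤ x}) := by
  set A := {ω | x < ∑ i, X i ω}
  set C := {ω | ∀ i, X i ω ≤ x}
  have hC : MeasurableSet C := by
    simp only [C, ofPred_forall]
    exact .iInter fun i => measurableSet_le (hmeas i) measurable_const
  have hdiff : P.real (A \ C) = P.real Cᶜ := by
    refine measureReal_congr ?_
    filter_upwards [ae_all_iff.2 hnonneg] with ω hω
    change (ω ∈ A \ C) = (ω ∈ Cᶜ)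
    simp only [A, C, Set.mem_sdiff, mem_compl_iff, mem_ofPred_eq, not_forall, not_le, eq_iff_iff,
      and_iff_right_iff_imp]
    rintro ⟨i, hi⟩
    exact hi.trans_le (Finset.single_le_sum (fun j _ => hω j) (Finset.mem_univ i))
  rw [← probReal_compl_eq_one_sub hC, ← hdiff,
    ← measureReal_inter_add_sdiff (s := A) hC, ofPred_and]
  ring

end IndependentSample

theorem subexponential_truncated_sum_littleO_general
    {Ω : Type} [MeasurableSpace Ω] (P : Measure Ω) [IsProbabilityMeasure P]
    (μ : Measure ℝ) (hμ : Subexponential μ)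
    (n : ℕ) (X : Fin n → Ω → ℝ)
    (hmeas : ∀ i, Measurable (X i))
    (hindep : iIndepFun X P)
    (hlaw : ∀ i, Measure.map (X i) P = μ) :
    (fun x => (P {ω | x < ∑ i, X i ω ∧ ∀ i, X i ω ≤ x}).toReal)
      =o[atTop] fun x => tailP μ x := by
  have := hμ.isProbabilityMeasure
  have hnonneg : ∀ i, 0 ≤ᵐ[P] X i := fun i =>
    (ae_of_ae_map (hmeas i).aemeasurable ((hlaw i).symm ▸ hμ.ae_pos)).mono fun _ h => h.le
  have hratio : ∀ x, (P {ω | x < ∑ i, X i ω ∧ ∀ i, X i ω ≤ x}).toReal / tailP μ x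
      = convTail μ n x / tailP μ x - (1 - (1 - tailP μ x) ^ n) / tailP μ x := fun x => by
    rw [← measureReal_def, measureReal_lt_sum_and_forall_le hmeas hnonneg,
      measureReal_lt_sum_eq_convTail hmeas hindep hlaw,
      measureReal_forall_le_eq_pow hmeas hindep hlaw, measureReal_Iic_eq_one_sub_tailP,
      Fintype.card_fin, sub_div]
  rw [isLittleO_iff_tendsto' (.of_forall fun x hx => absurd hx (hμ.tailP_pos x).ne')]
  simpa [hratio] using (hμ.tendsto_convTail_div_tailP n).sub <|
    tendsto_one_sub_one_sub_pow_div (tendsto_tailP_atTop μ)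
      (.of_forall fun x => (hμ.tailP_pos x).ne') n

/-- For i.i.d. `X₁,…,Xₙ` with subexponential distribution `F`,
`P[X₁+⋯+Xₙ > x, Xᵢ ≤ x for all i] = o(1-F(x))` as `x → ∞`. -/
theorem subexponential_truncated_sum_littleO
    {Ω : Type} [MeasurableSpace Ω] (P : Measure Ω) [IsProbabilityMeasure P]
    (μ : Measure ℝ) (hμ : Subexponential μ)
    (n : ℕ) (hn : 1 ≤ n) (X : Fin n → Ω → ℝ)
    (hmeas : ∀ i, Measurable (X i))
    (hindep : iIndepFun X P)
    (hlaw : ∀ i, Measure.map (X i) P = μ) :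
    (fun x => (P {ω | x < ∑ i, X i ω ∧ ∀ i, X i ω ≤ x}).toReal)
      =o[atTop] fun x => tailP μ x :=
  subexponential_truncated_sum_littleO_general P μ hμ n X hmeas hindep hlaw
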